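/- Let (X, 𝒳) be a measurable space, let κ be a Markov kernel from X to X (so that κ x is a probability measure on X for every x ∈ X), let γ ∈ ℝ, and let R : X → ℝ and Φ : X → ℝ be measurable functions such that Φ is integrable with respect to κ x for every x. Suppose Φ is a TD-fixpoint of the Bellman update with reward −R, i.e., for every x ∈ X, Φ(x) = −R(x) + γ ∫ Φ(y) ∂(κ x)(y). Then for every x ∈ X, the expectation of the shaping reward equals R, i.e., ∫ (γ Φ(y) − Φ(x)) ∂(κ x)(y) = R(x). -/

import Mathlib

open MeasureTheory ProbabilityTheory

theorem integral_const_mul_sub_const {Ω : Type*} [MeasurableSpace Ω] (μ : Measure Ω)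
    [IsProbabilityMeasure μ] {f : Ω → ℝ} (hf : Integrable f μ) (a c : ℝ) :
    ∫ ω, (a * f ω - c) ∂μ = a * ∫ ω, f ω ∂μ - c := by
  rw [integral_sub (hf.const_mul a) (integrable_const c), integral_const_mul, integral_const,
    probReal_univ, one_smul]

theorem shaping_reward_expectation_eq_reward_general
    {X : Type*} [MeasurableSpace X]
    (κ : Kernel X X) [IsMarkovKernel κ]
    (γ : ℝ) (R Φ : X → ℝ)
    (hint : ∀ x, Integrable Φ (κ x))
    (hfix : ∀ x, Φ x = -R x + γ * ∫ y, Φ y ∂(κ x)) :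
    ∀ x, ∫ y, (γ * Φ y - Φ x) ∂(κ x) = R x := by
  intro x
  rw [integral_const_mul_sub_const (κ x) (hint x), hfix x]
  ring

/-- **Theorem 1 (MFRS).** If the goal-conditioned potential `Φ` is a TD-fixpoint of the
Bellman update with reward `-R`, i.e. `Φ x = -R x + γ ∫ Φ dκ x` for all `x`, then the
expectation of the shaping reward `γ Φ(y) - Φ(x)` under the Markov kernel `κ` equals the
(magnetic) reward `R`. -/
theorem shaping_reward_expectation_eq_reward
    {X : Type*} [MeasurableSpace X]
    (κ : Kernel X X) [IsMarkovKernel κ]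
    (γ : ℝ) (R Φ : X → ℝ)
    (hR : Measurable R) (hΦ : Measurable Φ)
    (hint : ∀ x, Integrable Φ (κ x))
    (hfix : ∀ x, Φ x = -R x + γ * ∫ y, Φ y ∂(κ x)) :
    ∀ x, ∫ y, (γ * Φ y - Φ x) ∂(κ x) = R x :=
  shaping_reward_expectation_eq_reward_general κ γ R Φ hint hfix
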